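/- Assume h : ℝ^p → [0,+∞] is convex, proper, the minimization problem defining β̂ has at least one solution, and h(β*) < +∞. Let t₀, γ > 0. If εᵀX(β̂−β*) + h(β*) − h(β̂) − ‖X(β̂−β*)‖² ≤ t₀γ, then H(t₀) ≤ ‖X(β̂−β*)‖ + γ, where H(t) = (1/t)·sup_{β∈ℝ^p : ‖X(β−β*)‖ ≤ t} (εᵀX(β−β*) + h(β*) − h(β)). -/
import Mathlib


open scoped ENNReal

/-- Euclidean norm of a vector in `ℝ^k`. -/
noncomputable def l2norm {k : ℕ} (v : Fin k → ℝ) : ℝ := Real.sqrt (∑ i, (v i) ^ 2)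

/-- Euclidean inner product on `ℝ^k`. -/
noncomputable def dotp {k : ℕ} (u v : Fin k → ℝ) : ℝ := ∑ i, u i * v i


lemma l2norm_nonneg {k : ℕ} (v : Fin k → ℝ) : 0 ≤ l2norm v := Real.sqrt_nonneg _

lemma l2norm_sq {k : ℕ} (v : Fin k → ℝ) : l2norm v ^ 2 = dotp v v := by
  rw [l2norm, Real.sq_sqrt (by positivity)]
  simp only [dotp, sq]

lemma dotp_self_nonneg {k : ℕ} (v : Fin k → ℝ) : 0 ≤ dotp v v := by
  rw [← l2norm_sq]; positivity

lemma dotp_cs {k : ℕ} (u v : Fin k → ℝ) : dotp u v ≤ l2norm u * l2norm v := by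
  have h1 := Finset.sum_mul_sq_le_sq_mul_sq Finset.univ u v
  have h2 : dotp u v ≤ Real.sqrt ((dotp u v) ^ 2) := by
    rw [Real.sqrt_sq_eq_abs]; exact le_abs_self _
  calc dotp u v ≤ Real.sqrt ((dotp u v) ^ 2) := h2
    _ ≤ Real.sqrt ((∑ i, u i ^ 2) * ∑ i, v i ^ 2) := Real.sqrt_le_sqrt h1
    _ = l2norm u * l2norm v := by
        rw [Real.sqrt_mul (by positivity)]; rfl

lemma dotp_expand1 {k : ℕ} (v w : Fin k → ℝ) (a : ℝ) :
    dotp (v + a • w) (v + a • w) = dotp v v + 2*a*dotp v w + a^2 * dotp w w := by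
  simp only [dotp, Finset.mul_sum, ← Finset.sum_add_distrib, Pi.add_apply, Pi.smul_apply,
    smul_eq_mul]
  exact Finset.sum_congr rfl fun i _ => by ring

lemma dotp_expand2 {k : ℕ} (u e z : Fin k → ℝ) :
    dotp (u - e) (z - u) = dotp u z - dotp u u - dotp e z + dotp e u := by
  simp only [dotp, Finset.mul_sum, ← Finset.sum_add_distrib, ← Finset.sum_sub_distrib,
    Pi.sub_apply]
  exact Finset.sum_congr rfl fun i _ => by ring
/-- `H(t) = (1/t) · sup_{β : ‖X(β-β*)‖ ≤ t} (εᵀX(β-β*) + h(β*) - h(β))`. -/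
noncomputable def Hval {n p : ℕ} (X : Matrix (Fin n) (Fin p) ℝ) (bs : Fin p → ℝ)
    (h : (Fin p → ℝ) → ℝ≥0∞) (e : Fin n → ℝ) (t : ℝ) : ℝ :=
  sSup {x : ℝ | ∃ b : Fin p → ℝ, l2norm (X.mulVec (b - bs)) ≤ t ∧ h b ≠ ⊤ ∧
      x = dotp e (X.mulVec (b - bs)) + (h bs).toReal - (h b).toReal} / t

/-- if `εᵀX(β̂-β*) + h(β*) - h(β̂) - ‖X(β̂-β*)‖² ≤ t₀γ` then
`H(t₀) ≤ ‖X(β̂-β*)‖ + γ`. -/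
theorem H_le_prediction_error_plus_gamma {n p : ℕ} (X : Matrix (Fin n) (Fin p) ℝ)
    (bs : Fin p → ℝ) (ε : Fin n → ℝ) (y : Fin n → ℝ) (hy : y = X.mulVec bs + ε)
    (h : (Fin p → ℝ) → ℝ≥0∞)
    (hconv : ∀ b₁ b₂ : Fin p → ℝ, ∀ a : ℝ, 0 ≤ a → a ≤ 1 →
      h (a • b₁ + (1 - a) • b₂) ≤ ENNReal.ofReal a * h b₁ + ENNReal.ofReal (1 - a) * h b₂)
    (hproper : ∃ b : Fin p → ℝ, h b ≠ ⊤)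
    (hexists : ∀ (y' : Fin n → ℝ) (X' : Matrix (Fin n) (Fin p) ℝ),
      ∃ bhat' : Fin p → ℝ, ∀ b : Fin p → ℝ,
        ENNReal.ofReal (l2norm (X'.mulVec bhat' - y') ^ 2) + 2 * h bhat' ≤
          ENNReal.ofReal (l2norm (X'.mulVec b - y') ^ 2) + 2 * h b)
    (hfin : h bs ≠ ⊤)
    (bhat : Fin p → ℝ)
    (hmin : ∀ b : Fin p → ℝ,
      ENNReal.ofReal (l2norm (X.mulVec bhat - y) ^ 2) + 2 * h bhat ≤
        ENNReal.ofReal (l2norm (X.mulVec b - y) ^ 2) + 2 * h b)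
    (t₀ γ : ℝ) (ht₀ : 0 < t₀) (hγ : 0 < γ)
    (hkey : dotp ε (X.mulVec (bhat - bs)) + (h bs).toReal - (h bhat).toReal -
        l2norm (X.mulVec (bhat - bs)) ^ 2 ≤ t₀ * γ) :
    Hval X bs h ε t₀ ≤ l2norm (X.mulVec (bhat - bs)) + γ := by
  set u := X.mulVec (bhat - bs) with hu
  -- finiteness of h bhat
  have hbhat_fin : h bhat ≠ ⊤ := by
    have h1 := hmin bs
    have h2 : ENNReal.ofReal (l2norm (X.mulVec bs - y) ^ 2) + 2 * h bs ≠ ⊤ :=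
      ENNReal.add_ne_top.2 ⟨ENNReal.ofReal_ne_top, ENNReal.mul_ne_top (by simp) hfin⟩
    have h3 := ne_top_of_le_ne_top h2 h1
    have h4 : 2 * h bhat ≠ ⊤ := fun ht => h3 (by simp [ht])
    intro ht; exact h4 (by simp [ht])
  -- key gradient inequality
  have hgrad : ∀ b : Fin p → ℝ, h b ≠ ⊤ →
      (h bhat).toReal - (h b).toReal ≤ dotp (X.mulVec bhat - y) (X.mulVec (b - bhat)) := by
    intro b hb
    set v := X.mulVec bhat - y with hv
    set w := X.mulVec (b - bhat) with hw
    have hstep : ∀ a : ℝ, 0 < a → a ≤ 1 →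
        2*a*((h bhat).toReal - (h b).toReal) ≤ 2*a*dotp v w + a^2 * dotp w w := by
      intro a ha0 ha1
      set ba := a • b + (1 - a) • bhat with hba
      have hconv' := hconv b bhat a ha0.le ha1
      have hfin_rhs : ENNReal.ofReal a * h b + ENNReal.ofReal (1 - a) * h bhat ≠ ⊤ :=
        ENNReal.add_ne_top.2 ⟨ENNReal.mul_ne_top ENNReal.ofReal_ne_top hb,
          ENNReal.mul_ne_top ENNReal.ofReal_ne_top hbhat_fin⟩
      have hba_fin : h ba ≠ ⊤ := ne_top_of_le_ne_top hfin_rhs hconv'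
      -- convexity in reals
      have hconvr : (h ba).toReal ≤ a * (h b).toReal + (1 - a) * (h bhat).toReal := by
        have := (ENNReal.toReal_le_toReal hba_fin hfin_rhs).2 hconv'
        rwa [ENNReal.toReal_add (ENNReal.mul_ne_top ENNReal.ofReal_ne_top hb)
          (ENNReal.mul_ne_top ENNReal.ofReal_ne_top hbhat_fin), ENNReal.toReal_mul,
          ENNReal.toReal_mul, ENNReal.toReal_ofReal ha0.le,
          ENNReal.toReal_ofReal (by linarith)] at this
      -- minimality in reals
      have hminr : l2norm (X.mulVec bhat - y) ^ 2 + 2 * (h bhat).toReal ≤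
          l2norm (X.mulVec ba - y) ^ 2 + 2 * (h ba).toReal := by
        have h1 := hmin ba
        have hl : ENNReal.ofReal (l2norm (X.mulVec bhat - y) ^ 2) + 2 * h bhat ≠ ⊤ :=
          ENNReal.add_ne_top.2 ⟨ENNReal.ofReal_ne_top, ENNReal.mul_ne_top (by simp) hbhat_fin⟩
        have hr : ENNReal.ofReal (l2norm (X.mulVec ba - y) ^ 2) + 2 * h ba ≠ ⊤ :=
          ENNReal.add_ne_top.2 ⟨ENNReal.ofReal_ne_top, ENNReal.mul_ne_top (by simp) hba_fin⟩
        have := (ENNReal.toReal_le_toReal hl hr).2 h1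
        rwa [ENNReal.toReal_add ENNReal.ofReal_ne_top (ENNReal.mul_ne_top (by simp) hbhat_fin),
          ENNReal.toReal_add ENNReal.ofReal_ne_top (ENNReal.mul_ne_top (by simp) hba_fin),
          ENNReal.toReal_mul, ENNReal.toReal_mul, ENNReal.toReal_ofReal (by positivity),
          ENNReal.toReal_ofReal (by positivity), ENNReal.toReal_ofNat] at this
      -- expansion
      have hba_eq : X.mulVec ba - y = v + a • w := by
        have : ba = bhat + a • (b - bhat) := by
          rw [hba]; funext i; simp [Pi.smul_apply, smul_eq_mul]; ring
        rw [this, Matrix.mulVec_add, Matrix.mulVec_smul, hv, hw]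
        funext i; simp; ring
      have hB : l2norm (X.mulVec ba - y) ^ 2 = dotp v v + 2*a*dotp v w + a^2 * dotp w w := by
        rw [hba_eq, l2norm_sq, dotp_expand1]
      have hA : l2norm (X.mulVec bhat - y) ^ 2 = dotp v v := by rw [← hv, l2norm_sq]
      rw [hA, hB] at hminr
      linarith
    -- limit a → 0
    apply le_of_forall_pos_le_add
    intro δ hδ
    have hww : 0 ≤ dotp w w := dotp_self_nonneg w
    set a : ℝ := min 1 (δ / (dotp w w + 1)) with haa
    have ha0 : 0 < a := lt_min one_pos (by positivity)
    have ha1 : a ≤ 1 := min_le_left _ _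
    have ha2 : a * (dotp w w + 1) ≤ δ := by
      have : a ≤ δ / (dotp w w + 1) := min_le_right _ _
      rw [le_div_iff₀ (by positivity)] at this
      exact this
    have := hstep a ha0 ha1
    nlinarith [mul_pos ha0 ha0, mul_nonneg ha0.le hww]
  -- main conclusion
  rw [Hval, div_le_iff₀ ht₀]
  apply Real.sSup_le
  · rintro x ⟨b, hble, hbfin, rfl⟩
    have hg := hgrad b hbfin
    set z := X.mulVec (b - bs) with hz
    have hv_eq : X.mulVec bhat - y = u - ε := by
      rw [hy, hu, Matrix.mulVec_sub]; funext i; simp; ring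
    have hw_eq : X.mulVec (b - bhat) = z - u := by
      rw [hz, hu, ← Matrix.mulVec_sub]
      congr 1; funext i; simp
    rw [hv_eq, hw_eq, dotp_expand2] at hg
    have hcs : dotp u z ≤ l2norm u * l2norm z := dotp_cs u z
    have hzle : l2norm u * l2norm z ≤ l2norm u * t₀ :=
      mul_le_mul_of_nonneg_left hble (l2norm_nonneg u)
    have huu : dotp u u = l2norm u ^ 2 := (l2norm_sq u).symm
    have hεu : dotp ε u + (h bs).toReal - (h bhat).toReal - l2norm u ^ 2 ≤ t₀ * γ := hkey
    nlinarith [hg, hcs, hzle, huu, hεu]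
  · have := l2norm_nonneg u
    positivity
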